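/- The sequence b₁ satisfies the second-order linear recurrence b₁(k+2) = b₁(k+1) + 2·b₁(k) for all natural numbers k, i.e. a₁(2^{k+2} − 1) = a₁(2^{k+1} − 1) + 2·a₁(2^k − 1). -/

import Mathlib

/-
Over 𝔽₂, squaring is `expand 2`, so with `T = 1 + X + X²` and `E = expand 2 (Tⁿ)`,
  `T^(2n+1) = T·E = expand 2 ((1 + X)·Tⁿ) + X·E`,
  `(1 + X)·T^(2n+1) = (1 + X³)·E = E + X·expand 2 (X·Tⁿ)`.
The two summands live on even and odd exponents respectively, so their supports add up:
`a₁(2n+1) = a₂(n) + a₁(n)` and `a₂(2n+1) = 2·a₁(n)`. Since `2^(k+1) - 1 = 2(2^k - 1) + 1`,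
eliminating `a₂` gives the recurrence.
-/

open Polynomial

/-- `a₁ n` : number of nonzero coefficients of `(1+x+x²)ⁿ` over `𝔽₂`. -/
noncomputable def a1 (n : ℕ) : ℕ :=
  (((1 + X + X ^ 2 : (ZMod 2)[X]) ^ n).support).card

/-- `a₂ n` : number of nonzero coefficients of `(1+x)(1+x+x²)ⁿ` over `𝔽₂`. -/
noncomputable def a2 (n : ℕ) : ℕ :=
  (((1 + X) * (1 + X + X ^ 2 : (ZMod 2)[X]) ^ n).support).card

open Finset

namespace Polynomial

variable {R : Type*}

theorem support_expand [CommSemiring R] {p : ℕ} (hp : 0 < p) (f : R[X]) :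
    (expand R p f).support = f.support.image (p * ·) := by
  ext n
  simp only [mem_support_iff, mem_image, coeff_expand hp]
  constructor
  · intro h
    have hdvd : p ∣ n := by
      by_contra hn
      simp [hn] at h
    exact ⟨n / p, by simpa [hdvd] using h, Nat.mul_div_cancel' hdvd⟩
  · rintro ⟨m, hm, rfl⟩
    simpa [Nat.mul_div_cancel_left m hp] using hm

theorem support_X_mul [Semiring R] (f : R[X]) :
    (X * f).support = f.support.image (· + 1) := by
  ext n
  simp only [mem_support_iff, mem_image]
  cases n with
  | zero => simp
  | succ m => simp [coeff_X_mul]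

theorem card_support_X_mul [Semiring R] (f : R[X]) : #(X * f).support = #f.support := by
  rw [support_X_mul, card_image_of_injective _ (add_left_injective 1)]

theorem support_add_of_disjoint [Semiring R] {f g : R[X]}
    (h : Disjoint f.support g.support) : (f + g).support = f.support ∪ g.support := by
  ext n
  simp only [mem_union, mem_support_iff, coeff_add]
  by_cases hf : f.coeff n = 0
  · simp [hf]
  · have hg : g.coeff n = 0 := notMem_support_iff.mp (disjoint_left.mp h (mem_support_iff.mpr hf))
    simp [hf, hg]

theorem card_support_expand_two_add_X_mul [CommSemiring R] (f g : R[X]) :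
    #(expand R 2 f + X * expand R 2 g).support = #f.support + #g.support := by
  have hdisj : Disjoint (expand R 2 f).support (X * expand R 2 g).support := by
    simp only [support_expand two_pos, support_X_mul, image_image, disjoint_left, mem_image]
    rintro _ ⟨a, -, rfl⟩ ⟨b, -, hb⟩
    simp only [Function.comp_apply] at hb
    omega
  rw [support_add_of_disjoint hdisj, card_union_of_disjoint hdisj, card_support_X_mul,
    support_expand two_pos, support_expand two_pos,
    card_image_of_injective _ (mul_right_injective₀ two_ne_zero),
    card_image_of_injective _ (mul_right_injective₀ two_ne_zero)]

end Polynomial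

theorem a1_two_mul_add_one (n : ℕ) : a1 (2 * n + 1) = a1 n + a2 n := by
  have hpow : (1 + X + X ^ 2 : (ZMod 2)[X]) ^ (2 * n + 1)
      = expand (ZMod 2) 2 ((1 + X) * (1 + X + X ^ 2) ^ n)
        + X * expand (ZMod 2) 2 ((1 + X + X ^ 2) ^ n) := by
    rw [pow_succ, pow_mul', ← ZMod.expand_card]
    simp only [map_mul, map_add, map_one, expand_X]
    ring
  rw [a1, hpow, card_support_expand_two_add_X_mul, a1, a2, add_comm]

theorem a2_two_mul_add_one (n : ℕ) : a2 (2 * n + 1) = 2 * a1 n := by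
  have hpow : (1 + X) * (1 + X + X ^ 2 : (ZMod 2)[X]) ^ (2 * n + 1)
      = expand (ZMod 2) 2 ((1 + X + X ^ 2) ^ n)
        + X * expand (ZMod 2) 2 (X * (1 + X + X ^ 2) ^ n) := by
    rw [pow_succ, pow_mul', ← ZMod.expand_card]
    simp only [map_mul, expand_X]
    linear_combination (X + X ^ 2 : (ZMod 2)[X]) * expand (ZMod 2) 2 ((1 + X + X ^ 2) ^ n) *
      (CharTwo.two_eq_zero (R := (ZMod 2)[X]))
  rw [a2, hpow, card_support_expand_two_add_X_mul, card_support_X_mul, a1, two_mul]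

theorem Nat.two_pow_succ_sub_one (k : ℕ) : 2 ^ (k + 1) - 1 = 2 * (2 ^ k - 1) + 1 := by
  have := Nat.one_le_two_pow (n := k)
  rw [pow_succ]
  omega

theorem b1_recurrence (k : ℕ) :
    a1 (2 ^ (k + 2) - 1) = a1 (2 ^ (k + 1) - 1) + 2 * a1 (2 ^ k - 1) := by
  rw [Nat.two_pow_succ_sub_one (k + 1), a1_two_mul_add_one, Nat.two_pow_succ_sub_one k,
    a2_two_mul_add_one]
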